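/- arXiv:2512.15546 — 3 statements merged into one kernel-verified Lean document; each statement's English description precedes it below -/
import Mathlib

section
/- Let N be a positive integer, let h₀ ∈ ℂ, let h : Fin N → ℂ, and for each n let Θₙ ⊆ ℂ be a nonempty finite set. Then the supremum of |h₀ + ∑ₙ wₙ · hₙ| over all choices with wₙ ∈ {t · w : t ∈ [0,1], w ∈ Θₙ} equals the maximum of |h₀ + ∑ₙ wₙ · hₙ| over all choices with wₙ ∈ {0} ∪ Θₙ. -/
/-!
The objective `w ↦ ‖h₀ + ∑ n, w n * h n‖` is convex, and `t • v` with `t ∈ [0, 1]` lies on the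
segment from `0` to `v`, so every amplitude-scaled choice lies in the convex hull of the finite
set of choices from `{0} ∪ Θ n`. By the maximum principle a convex function takes its largest
value on such a convex hull at a point of the finite set itself.
-/

open Set

theorem smul_mem_convexHull_zero_union {E : Type*} [AddCommGroup E] [Module ℝ E] {s : Set E}
    {v : E} (hv : v ∈ s) {t : ℝ} (ht : t ∈ Icc (0 : ℝ) 1) : t • v ∈ convexHull ℝ ({0} ∪ s) := by
  refine segment_subset_convexHull (s := {0} ∪ s) (Or.inl rfl) (Or.inr hv) ?_
  rw [segment_eq_image']
  exact ⟨t, ht, by simp⟩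

theorem convexOn_univ_norm_add_sum_mul {ι A : Type*} [Fintype ι] [NormedRing A]
    [NormedAlgebra ℝ A] (a₀ : A) (a : ι → A) :
    ConvexOn ℝ univ fun w : ι → A => ‖a₀ + ∑ i, w i * a i‖ := by
  let L : (ι → A) →ₗ[ℝ] A := ∑ i, LinearMap.mulRight ℝ (a i) ∘ₗ LinearMap.proj i
  simpa [L, Function.comp_def] using (convexOn_univ_norm.translate_right a₀).comp_linearMap L

theorem ConvexOn.sSup_image_eq_of_subset_convexHull {E : Type*} [AddCommGroup E] [Module ℝ E]
    {f : E → ℝ} (hf : ConvexOn ℝ univ f) {s A : Set E} (hs : s.Finite) (hsA : s ⊆ A)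
    (hA : A ⊆ convexHull ℝ s) : sSup (f '' A) = sSup (f '' s) := by
  rcases s.eq_empty_or_nonempty with rfl | hne
  · rw [convexHull_empty, subset_empty_iff] at hA
    rw [hA]
  have hbdd : BddAbove (f '' A) :=
    (hf.bddAbove_convexHull (subset_univ s) (hs.image f).bddAbove).mono (image_mono hA)
  refine le_antisymm (csSup_le ((hne.mono hsA).image f) ?_)
    (csSup_le_csSup hbdd (hne.image f) (image_mono hsA))
  rintro _ ⟨x, hx, rfl⟩
  obtain ⟨y, hy, hxy⟩ := hf.exists_ge_of_mem_convexHull (subset_univ s) (hA hx)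
  exact hxy.trans (le_csSup (hs.image f).bddAbove (mem_image_of_mem f hy))

theorem stmt_5_general (N : ℕ) (h₀ : ℂ) (h : Fin N → ℂ) (Θ : Fin N → Set ℂ)
    (hne : ∀ n, (Θ n).Nonempty) (hfin : ∀ n, (Θ n).Finite) :
    sSup ((fun w : Fin N → ℂ => ‖h₀ + ∑ n, w n * h n‖) ''
        {w | ∀ n, w n ∈ {z : ℂ | ∃ t ∈ Set.Icc (0 : ℝ) 1, ∃ v ∈ Θ n, z = t • v}}) =
      sSup ((fun w : Fin N → ℂ => ‖h₀ + ∑ n, w n * h n‖) ''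
        {w | ∀ n, w n ∈ ({0} ∪ Θ n : Set ℂ)}) := by
  have hpi : {w : Fin N → ℂ | ∀ n, w n ∈ ({0} ∪ Θ n : Set ℂ)} = univ.pi fun n => {0} ∪ Θ n := by
    ext; simp
  refine (convexOn_univ_norm_add_sum_mul h₀ h).sSup_image_eq_of_subset_convexHull ?_ ?_ ?_
  · rw [hpi]
    exact Finite.pi fun n => (finite_singleton 0).union (hfin n)
  · intro w hw n
    rcases hw n with hzero | hmem
    · obtain ⟨v, hv⟩ := hne n
      exact ⟨0, left_mem_Icc.2 zero_le_one, v, hv, by simpa using hzero⟩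
    · exact ⟨1, right_mem_Icc.2 zero_le_one, w n, hmem, (one_smul ℝ _).symm⟩
  · intro w hw
    rw [hpi, convexHull_pi]
    intro n _
    obtain ⟨t, ht, v, hv, hwn⟩ := hw n
    exact hwn ▸ smul_mem_convexHull_zero_union hv ht

theorem stmt_5 (N : ℕ) (hN : 0 < N) (h₀ : ℂ) (h : Fin N → ℂ) (Θ : Fin N → Set ℂ)
    (hne : ∀ n, (Θ n).Nonempty) (hfin : ∀ n, (Θ n).Finite) :
    sSup ((fun w : Fin N → ℂ => ‖h₀ + ∑ n, w n * h n‖) ''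
        {w | ∀ n, w n ∈ {z : ℂ | ∃ t ∈ Set.Icc (0 : ℝ) 1, ∃ v ∈ Θ n, z = t • v}}) =
      sSup ((fun w : Fin N → ℂ => ‖h₀ + ∑ n, w n * h n‖) ''
        {w | ∀ n, w n ∈ ({0} ∪ Θ n : Set ℂ)}) :=
  stmt_5_general N h₀ h Θ hne hfin
end

section
/- Let N be a positive integer, let h : Fin N → ℂ, and for each n let Θₙ ⊆ ℂ be a nonempty finite set. Then the maximum over all choices (w₁,…,w_N) with wₙ ∈ Θₙ of |∑ₙ wₙ · hₙ| equals the supremum over θ ∈ [0, 2π] of ∑ₙ (max over z ∈ hₙ • Θₙ of Re(e^{-iθ} · z)). -/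
open Set Pointwise

/-!
Put `R(w, θ) = Re (e^{-iθ} ∑ₙ wₙ hₙ)`. For fixed `w` the maximum of `R` over `θ` is `|∑ₙ wₙ hₙ|`,
attained at `θ ≡ arg (∑ₙ wₙ hₙ)`; for fixed `θ`, `R` is a sum of terms each depending on a single
`wₙ`, so its maximum over `w` is the sum of the termwise maxima. Both sides are therefore the
supremum of `R` over all pairs `(w, θ)`.
-/

theorem csSup_image_eq_csSup_image_of_isGreatest {α γ β : Type*} [ConditionallyCompleteLattice β]
    {S : Set α} {T : Set γ} {g : α → γ → β} {φ : α → β} {ψ : γ → β}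
    (hS : S.Nonempty) (hT : T.Nonempty) (hbdd : BddAbove (φ '' S))
    (hφ : ∀ a ∈ S, IsGreatest ((g a ·) '' T) (φ a))
    (hψ : ∀ b ∈ T, IsGreatest ((g · b) '' S) (ψ b)) :
    sSup (φ '' S) = sSup (ψ '' T) := by
  refine (IsLUB.csSup_eq ⟨?_, ?_⟩ (hT.image ψ)).symm
  · rintro _ ⟨b, hb, rfl⟩
    obtain ⟨a, ha, hab⟩ := (hψ b hb).1
    exact hab ▸ ((hφ a ha).2 ⟨b, hb, rfl⟩).trans (le_csSup hbdd ⟨a, ha, rfl⟩)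
  · intro x hx
    refine csSup_le (hS.image φ) ?_
    rintro _ ⟨a, ha, rfl⟩
    obtain ⟨b, hb, hab⟩ := (hφ a ha).1
    exact hab ▸ ((hψ b hb).2 ⟨a, ha, rfl⟩).trans (hx ⟨b, hb, rfl⟩)

theorem isGreatest_image_sum_of_finite {ι α β : Type*} [Fintype ι]
    [ConditionallyCompleteLinearOrder β] [AddCommMonoid β] [AddLeftMono β]
    (Θ : ι → Set α) (f : ι → α → β) (hne : ∀ i, (Θ i).Nonempty) (hfin : ∀ i, (Θ i).Finite) :
    IsGreatest ((fun w : ι → α => ∑ i, f i (w i)) '' {w | ∀ i, w i ∈ Θ i})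
      (∑ i, sSup (f i '' Θ i)) := by
  constructor
  · choose w hw hfw using fun i => ((hne i).image (f i)).csSup_mem ((hfin i).image (f i))
    exact ⟨w, hw, Finset.sum_congr rfl fun i _ => hfw i⟩
  · rintro _ ⟨w, hw, rfl⟩
    exact Finset.sum_le_sum fun i _ => le_csSup ((hfin i).image (f i)).bddAbove ⟨w i, hw i, rfl⟩

namespace Complex

theorem re_exp_neg_mul_I_mul_le_norm (θ : ℝ) (z : ℂ) : (exp (-θ * I) * z).re ≤ ‖z‖ :=
  calc (exp (-θ * I) * z).re ≤ ‖exp (-θ * I) * z‖ := re_le_norm _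
    _ = ‖z‖ := by rw [norm_mul, ← ofReal_neg, norm_exp_ofReal_mul_I, one_mul]

theorem exp_neg_arg_mul_I_mul_self (z : ℂ) : exp (-arg z * I) * z = ‖z‖ := by
  nth_rw 2 [← norm_mul_exp_arg_mul_I z]
  rw [mul_left_comm, ← exp_add, neg_mul, neg_add_cancel, exp_zero, mul_one]

theorem periodic_exp_neg_mul_I : Function.Periodic (fun θ : ℝ => exp (-θ * I)) (2 * Real.pi) := by
  intro θ
  simpa [add_mul, add_comm] using exp_mul_I_periodic.neg (-(θ : ℂ))

theorem isGreatest_re_exp_neg_mul_I_mul (z : ℂ) :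
    IsGreatest ((fun θ : ℝ => (exp (-θ * I) * z).re) '' Icc 0 (2 * Real.pi)) ‖z‖ := by
  refine ⟨?_, ?_⟩
  · obtain ⟨θ, hθ, hexp⟩ := periodic_exp_neg_mul_I.exists_mem_Ico₀ Real.two_pi_pos (arg z)
    refine ⟨θ, Ico_subset_Icc_self hθ, ?_⟩
    dsimp only
    rw [← hexp, exp_neg_arg_mul_I_mul_self, ofReal_re]
  · rintro _ ⟨θ, -, rfl⟩
    exact re_exp_neg_mul_I_mul_le_norm θ z

end Complex

theorem stmt_7_general (N : ℕ) (h : Fin N → ℂ) (Θ : Fin N → Set ℂ)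
    (hne : ∀ n, (Θ n).Nonempty) (hfin : ∀ n, (Θ n).Finite) :
    sSup ((fun w : Fin N → ℂ => ‖∑ n, w n * h n‖) ''
        {w | ∀ n, w n ∈ Θ n}) =
      sSup ((fun θ : ℝ =>
          ∑ n, sSup ((fun z : ℂ => (Complex.exp (-(θ : ℂ) * Complex.I) * z).re) ''
            (h n • Θ n))) '' Set.Icc 0 (2 * Real.pi)) := by
  have hchoices_fin : {w : Fin N → ℂ | ∀ n, w n ∈ Θ n}.Finite := by
    simpa only [Set.pi, mem_univ, true_imp_iff] using Set.Finite.pi hfin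
  refine csSup_image_eq_csSup_image_of_isGreatest (g := fun (w : Fin N → ℂ) (θ : ℝ) =>
      (Complex.exp (-(θ : ℂ) * Complex.I) * ∑ n, w n * h n).re)
    ⟨fun n => (hne n).some, fun n => (hne n).some_mem⟩
    (nonempty_Icc.mpr Real.two_pi_pos.le) (hchoices_fin.image _).bddAbove
    (fun w _ => Complex.isGreatest_re_exp_neg_mul_I_mul _) fun θ _ => ?_
  convert isGreatest_image_sum_of_finite Θ
    (fun n u => (Complex.exp (-(θ : ℂ) * Complex.I) * (h n * u)).re) hne hfin using 2 with w
  · simp only [Finset.mul_sum, Complex.re_sum, mul_comm (w _)]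
  · rw [← image_smul, image_image]
    rfl

theorem stmt_7 (N : ℕ) (hN : 0 < N) (h : Fin N → ℂ) (Θ : Fin N → Set ℂ)
    (hne : ∀ n, (Θ n).Nonempty) (hfin : ∀ n, (Θ n).Finite) :
    sSup ((fun w : Fin N → ℂ => ‖∑ n, w n * h n‖) ''
        {w | ∀ n, w n ∈ Θ n}) =
      sSup ((fun θ : ℝ =>
          ∑ n, sSup ((fun z : ℂ => (Complex.exp (-(θ : ℂ) * Complex.I) * z).re) ''
            (h n • Θ n))) '' Set.Icc 0 (2 * Real.pi)) :=
  stmt_7_general N h Θ hne hfin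
end

section
/- Let S, T ⊆ ℂ be nonempty finite sets. Then the number of extreme points of the convex polygon convexHull ℝ S + convexHull ℝ T is at most |S| + |T|. -/
/-!
Every extreme point of `conv (S + T)` is a point of `S + T` that uniquely maximizes some real
linear functional, and up to a positive factor such a functional is `t • re + im`,
`t • re - im`, `re` or `-re`. For each of the two pencils `t • re ± im`, the slopes `t` exposing
a point of a finite set form an open interval, the intervals of distinct points are disjoint, and
the interval of `a + b` in `S + T` is the intersection of the interval of `a` in `S` with that of
`b` in `T`. Recording each exposed point by the right end of its interval thus maps the points of
`S + T` exposed by a pencil injectively to right ends of intervals of `S` or of `T`; the unbounded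
right end occurs for both, so each pencil exposes at most `|V_S| + |V_T| - 1` points of `S + T`.
The points exposed by both pencils are the strict maximizers of `re` and of `-re`, and counting
these on both sides gives the bound `|S| + |T|`.
-/

open Set Pointwise Filter

section StrictMax

variable {E : Type*}

def IsStrictMaxOn (φ : E → ℝ) (A : Set E) (a : E) : Prop :=
  ∀ x ∈ A, x ≠ a → φ x < φ a

def strictMaxPoints (φ : E → ℝ) (A : Set E) : Set E :=
  {a ∈ A | IsStrictMaxOn φ A a}

theorem strictMaxPoints_subset (φ : E → ℝ) (A : Set E) : strictMaxPoints φ A ⊆ A :=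
  sep_subset _ _

theorem IsStrictMaxOn.le {φ : E → ℝ} {A : Set E} {a x : E} (h : IsStrictMaxOn φ A a)
    (hx : x ∈ A) : φ x ≤ φ a := by
  rcases eq_or_ne x a with rfl | hxa
  exacts [le_rfl, (h x hx hxa).le]

theorem IsStrictMaxOn.of_eq_mul {φ ψ : E → ℝ} {A : Set E} {a : E} {c : ℝ}
    (h : IsStrictMaxOn φ A a) (hc : 0 ≤ c) (hφ : ∀ x, φ x = c * ψ x) :
    IsStrictMaxOn ψ A a := fun x hx hxa =>
  lt_of_mul_lt_mul_left (by simpa only [hφ] using h x hx hxa) hc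

theorem strictMaxPoints_subsingleton (φ : E → ℝ) (A : Set E) :
    (strictMaxPoints φ A).Subsingleton := fun a ha b hb => by
  by_contra hab
  exact (ha.2 b hb.1 (Ne.symm hab)).asymm (hb.2 a ha.1 hab)

theorem ncard_strictMaxPoints_le_one (φ : E → ℝ) (A : Set E) :
    (strictMaxPoints φ A).ncard ≤ 1 :=
  let h := strictMaxPoints_subsingleton φ A
  (ncard_le_one h.finite).2 h

variable [AddCommGroup E]

theorem isStrictMaxOn_add_iff (φ : E →+ ℝ) {S T : Set E} {a b : E} (ha : a ∈ S)
    (hb : b ∈ T) :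
    IsStrictMaxOn φ (S + T) (a + b) ↔ IsStrictMaxOn φ S a ∧ IsStrictMaxOn φ T b := by
  refine ⟨fun h => ⟨fun x hx hxa => ?_, fun y hy hyb => ?_⟩, ?_⟩
  · have := h (x + b) (add_mem_add hx hb) (by simpa using hxa)
    simp only [map_add] at this
    linarith
  · have := h (a + y) (add_mem_add ha hy) (by simpa using hyb)
    simp only [map_add] at this
    linarith
  · rintro ⟨hS, hT⟩ _ ⟨x, hx, y, hy, rfl⟩ hxy
    rw [map_add, map_add]
    by_cases hxa : x = a
    · subst hxa
      exact add_lt_add_right (hT y hy fun hyb => hxy (by rw [hyb])) _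
    · exact add_lt_add_of_lt_of_le (hS x hx hxa) (hT.le hy)

theorem ncard_strictMaxPoints_add_le (φ : E →+ ℝ) {S T : Set E} (hS : S.Finite)
    (hT : T.Finite) :
    (strictMaxPoints φ S).ncard + (strictMaxPoints φ T).ncard ≤
      (strictMaxPoints φ (S + T)).ncard + 1 := by
  have hS₁ := ncard_strictMaxPoints_le_one φ S
  have hT₁ := ncard_strictMaxPoints_le_one φ T
  rcases (strictMaxPoints φ S).eq_empty_or_nonempty with hS₀ | ⟨a, ha, haS⟩
  · rw [hS₀, ncard_empty]
    omega
  rcases (strictMaxPoints φ T).eq_empty_or_nonempty with hT₀ | ⟨b, hb, hbT⟩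
  · rw [hT₀, ncard_empty]
    omega
  have : 0 < (strictMaxPoints φ (S + T)).ncard :=
    (ncard_pos ((hS.add hT).subset (strictMaxPoints_subset _ _))).2
      ⟨a + b, add_mem_add ha hb, (isStrictMaxOn_add_iff φ ha hb).2 ⟨haS, hbT⟩⟩
  omega

end StrictMax

section UpperBounds

variable {α : Type*} [LinearOrder α] {I J : Set α}

theorem upperBounds_inter_eq_or (hI : I.OrdConnected) (hJ : J.OrdConnected)
    (h : (I ∩ J).Nonempty) :
    upperBounds (I ∩ J) = upperBounds I ∨ upperBounds (I ∩ J) = upperBounds J := by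
  obtain ⟨t, htI, htJ⟩ := h
  suffices upperBounds (I ∩ J) ⊆ upperBounds I ∨ upperBounds (I ∩ J) ⊆ upperBounds J from
    this.imp (fun h => h.antisymm (upperBounds_mono_set inter_subset_left))
      (fun h => h.antisymm (upperBounds_mono_set inter_subset_right))
  by_contra! h
  obtain ⟨y, hy, hyI⟩ := not_subset.1 h.1
  obtain ⟨y', hy', hyJ⟩ := not_subset.1 h.2
  simp only [mem_upperBounds, not_forall, not_le] at hyI hyJ
  obtain ⟨x, hx, hyx⟩ := hyI
  obtain ⟨x', hx', hyx'⟩ := hyJ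
  have hty : t ≤ y := hy ⟨htI, htJ⟩
  have hty' : t ≤ y' := hy' ⟨htI, htJ⟩
  rcases le_total x x' with hxx | hxx
  · exact (hy ⟨hx, hJ.out htJ hx' ⟨by order, hxx⟩⟩).not_gt hyx
  · exact (hy' ⟨hI.out htI hx ⟨by order, hxx⟩, hx'⟩).not_gt hyx'

theorem upperBounds_eq_empty_of_eventually [NoMaxOrder α] [Nonempty α] {s : Set α}
    (h : ∀ᶠ t in atTop, t ∈ s) : upperBounds s = ∅ :=
  eq_empty_iff_forall_notMem.2 fun y hy =>
    let ⟨_, ht, hyt⟩ := (h.and (eventually_gt_atTop y)).exists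
    (hy ht).not_gt hyt

variable [TopologicalSpace α] [OrderTopology α] [DenselyOrdered α] [NoMaxOrder α]

theorem upperBounds_ne_of_lt (hI : I.OrdConnected) (hJ : IsOpen J) (hIJ : Disjoint I J)
    {x y : α} (hx : x ∈ I) (hy : y ∈ J) (hxy : x < y) : upperBounds I ≠ upperBounds J := by
  intro heq
  have hyI : y ∈ upperBounds I := fun z hz =>
    le_of_not_gt fun hyz => disjoint_left.1 hIJ (hI.out hx hz ⟨hxy.le, hyz.le⟩) hy
  obtain ⟨z, hyz, hz⟩ := (hJ.eventually_mem hy).exists_gt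
  exact ((heq ▸ hyI) hz).not_gt hyz

theorem upperBounds_ne_of_disjoint (hIo : IsOpen I) (hJo : IsOpen J) (hI : I.OrdConnected)
    (hJ : J.OrdConnected) (hIne : I.Nonempty) (hJne : J.Nonempty) (hIJ : Disjoint I J) :
    upperBounds I ≠ upperBounds J := by
  obtain ⟨x, hx⟩ := hIne
  obtain ⟨y, hy⟩ := hJne
  rcases lt_trichotomy x y with hxy | rfl | hxy
  · exact upperBounds_ne_of_lt hI hJo hIJ hx hy hxy
  · exact (disjoint_left.1 hIJ hx hy).elim
  · exact (upperBounds_ne_of_lt hJ hIo hIJ.symm hy hx hxy).symm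

end UpperBounds

theorem eventually_mul_add_lt {p q r s : ℝ} (h : toLex (p, q) < toLex (r, s)) :
    ∀ᶠ t in atTop, t * p + q < t * r + s := by
  rcases Prod.Lex.toLex_lt_toLex.1 h with h | ⟨rfl, h⟩
  · filter_upwards [(tendsto_id.atTop_mul_const (sub_pos.2 h)).eventually_gt_atTop (q - s)]
      with t ht
    simp only [id] at ht
    linarith
  · exact Eventually.of_forall fun t => by linarith

section Pencil

variable {E : Type*} [AddCommGroup E] (f g : E →+ ℝ) {A S T : Set E} {a b : E}

def exposingSlopes (A : Set E) (a : E) : Set ℝ :=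
  {t | IsStrictMaxOn ⇑(t • f + g) A a}

def slopeVertices (A : Set E) : Set E :=
  {a ∈ A | (exposingSlopes f g A a).Nonempty}

theorem slopeVertices_subset (A : Set E) : slopeVertices f g A ⊆ A :=
  sep_subset _ _

theorem exposingSlopes_add (ha : a ∈ S) (hb : b ∈ T) :
    exposingSlopes f g (S + T) (a + b) = exposingSlopes f g S a ∩ exposingSlopes f g T b :=
  ext fun t => isStrictMaxOn_add_iff (t • f + g) ha hb

theorem ordConnected_exposingSlopes (A : Set E) (a : E) :
    (exposingSlopes f g A a).OrdConnected := by
  refine ⟨fun t₁ h₁ t₂ h₂ t ht x hx hxa => ?_⟩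
  have u₁ : t₁ * f x + g x < t₁ * f a + g a := h₁ x hx hxa
  have u₂ : t₂ * f x + g x < t₂ * f a + g a := h₂ x hx hxa
  show t * f x + g x < t * f a + g a
  rcases le_total (f x) (f a) with h | h
  · nlinarith [mul_le_mul_of_nonneg_right ht.1 (sub_nonneg.2 h)]
  · nlinarith [mul_le_mul_of_nonneg_right ht.2 (sub_nonneg.2 h)]

theorem isOpen_exposingSlopes (hA : A.Finite) (a : E) : IsOpen (exposingSlopes f g A a) := by
  have : exposingSlopes f g A a = ⋂ x ∈ A \ {a}, {t | t * f x + g x < t * f a + g a} := by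
    ext t
    simp [exposingSlopes, IsStrictMaxOn]
  rw [this]
  exact hA.sdiff.isOpen_biInter fun x _ => isOpen_lt (by fun_prop) (by fun_prop)

theorem disjoint_exposingSlopes (ha : a ∈ A) (hb : b ∈ A) (hab : a ≠ b) :
    Disjoint (exposingSlopes f g A a) (exposingSlopes f g A b) :=
  disjoint_left.2 fun _ hta htb => (hta b hb hab.symm).asymm (htb a ha hab)

theorem eventually_mem_exposingSlopes (hA : A.Finite)
    (h : ∀ x ∈ A, x ≠ a → toLex (f x, g x) < toLex (f a, g a)) :
    ∀ᶠ t in atTop, t ∈ exposingSlopes f g A a := by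
  refine hA.eventually_all.2 fun x hx => ?_
  by_cases hxa : x = a
  · exact Eventually.of_forall fun _ h => absurd hxa h
  · filter_upwards [eventually_mul_add_lt (h x hx hxa)] with t ht _ using ht

theorem exists_eventually_mem_exposingSlopes (hA : A.Finite) (hA' : A.Nonempty)
    (hfg : Function.Injective fun x => (f x, g x)) :
    ∃ a ∈ A, ∀ᶠ t in atTop, t ∈ exposingSlopes f g A a := by
  obtain ⟨a, ha, hmax⟩ := A.exists_max_image (fun x => toLex (f x, g x)) hA hA'
  exact ⟨a, ha, eventually_mem_exposingSlopes f g hA fun x hx hxa =>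
    (hmax x hx).lt_of_ne fun h => hxa (hfg (toLex_inj.1 h))⟩

theorem exposingSlopes_neg_left (A : Set E) (a : E) :
    exposingSlopes (-f) g A a = -exposingSlopes f g A a := by
  ext t
  have : ⇑(t • -f + g) = ⇑(-t • f + g) := by
    ext x
    simp
  rw [Set.mem_neg]
  exact iff_of_eq (congrArg (IsStrictMaxOn · A a) this)

theorem slopeVertices_neg_left (A : Set E) : slopeVertices (-f) g A = slopeVertices f g A := by
  simp only [slopeVertices, exposingSlopes_neg_left, nonempty_neg]

theorem strictMaxPoints_subset_slopeVertices (hA : A.Finite) :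
    strictMaxPoints f A ⊆ slopeVertices f g A := fun _ ⟨ha, hmax⟩ =>
  ⟨ha, (eventually_mem_exposingSlopes f g hA fun x hx hxa =>
    Prod.Lex.toLex_lt_toLex.2 (Or.inl (hmax x hx hxa))).exists⟩

theorem strictMaxPoints_neg_subset_slopeVertices (hA : A.Finite) :
    strictMaxPoints ⇑(-f) A ⊆ slopeVertices f g A :=
  slopeVertices_neg_left f g A ▸ strictMaxPoints_subset_slopeVertices (-f) g hA

theorem slopeVertices_inter_subset (A : Set E) :
    slopeVertices f g A ∩ slopeVertices f (-g) A ⊆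
      strictMaxPoints f A ∪ strictMaxPoints ⇑(-f) A := by
  rintro a ⟨⟨ha, t, ht⟩, -, t', ht'⟩
  have hsum : IsStrictMaxOn (fun x => (t + t') * f x) A a := fun x hx hxa => by
    have h₁ : t * f x + g x < t * f a + g a := ht x hx hxa
    have h₂ : t' * f x + -g x < t' * f a + -g a := ht' x hx hxa
    linarith
  rcases le_total 0 (t + t') with h | h
  · exact Or.inl ⟨ha, hsum.of_eq_mul h fun x => rfl⟩
  · exact Or.inr ⟨ha, hsum.of_eq_mul (neg_nonneg.2 h) fun x => by simp; ring⟩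

theorem mem_slopeVertices_union (hA : A.Finite) (ha : a ∈ A) {α β : ℝ}
    (h : IsStrictMaxOn (fun x => α * f x + β * g x) A a) :
    a ∈ slopeVertices f g A ∪ slopeVertices f (-g) A := by
  rcases lt_trichotomy β 0 with hβ | rfl | hβ
  · refine Or.inr ⟨ha, α / -β, h.of_eq_mul (neg_nonneg.2 hβ.le) fun x => ?_⟩
    show _ = -β * (α / -β * f x + -g x)
    have := hβ.ne
    field_simp
    ring
  · rcases le_total 0 α with hα | hα
    · exact Or.inl (strictMaxPoints_subset_slopeVertices f g hA
        ⟨ha, h.of_eq_mul hα fun x => by simp⟩)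
    · exact Or.inl (strictMaxPoints_neg_subset_slopeVertices f g hA
        ⟨ha, h.of_eq_mul (neg_nonneg.2 hα) fun x => by simp⟩)
  · refine Or.inl ⟨ha, α / β, h.of_eq_mul hβ.le fun x => ?_⟩
    show _ = β * (α / β * f x + g x)
    have := hβ.ne'
    field_simp

end Pencil

section Counting

variable {E : Type*} [AddCommGroup E] {f g : E →+ ℝ} {A S T : Set E}

theorem ncard_slopeVertices_add_add_one_le (hS : S.Finite) (hT : T.Finite) (hSne : S.Nonempty)
    (hTne : T.Nonempty) (hfg : Function.Injective fun x => (f x, g x)) :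
    (slopeVertices f g (S + T)).ncard + 1 ≤
      (slopeVertices f g S).ncard + (slopeVertices f g T).ncard := by
  let key (A : Set E) (a : E) : Set ℝ := upperBounds (exposingSlopes f g A a)
  have hmaps : ∀ v ∈ slopeVertices f g (S + T),
      key (S + T) v ∈ key S '' slopeVertices f g S ∪ key T '' slopeVertices f g T := by
    rintro _ ⟨⟨a, ha, b, hb, rfl⟩, hv⟩
    simp only [key, exposingSlopes_add f g ha hb] at hv ⊢
    rcases upperBounds_inter_eq_or (ordConnected_exposingSlopes f g S a)
      (ordConnected_exposingSlopes f g T b) hv with h | h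
    · exact Or.inl ⟨a, ⟨ha, hv.mono inter_subset_left⟩, h.symm⟩
    · exact Or.inr ⟨b, ⟨hb, hv.mono inter_subset_right⟩, h.symm⟩
  have hinj : InjOn (key (S + T)) (slopeVertices f g (S + T)) := fun v hv w hw hvw => by
    by_contra hne
    exact upperBounds_ne_of_disjoint (isOpen_exposingSlopes f g (hS.add hT) v)
      (isOpen_exposingSlopes f g (hS.add hT) w) (ordConnected_exposingSlopes f g _ v)
      (ordConnected_exposingSlopes f g _ w) hv.2 hw.2
      (disjoint_exposingSlopes f g hv.1 hw.1 hne) hvw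
  -- `∅` is the key of the point exposed by all large slopes, in `S` and in `T` alike
  have htop (A : Set E) (hA : A.Finite) (hA' : A.Nonempty) : ∅ ∈ key A '' slopeVertices f g A :=
    let ⟨a, ha, hev⟩ := exists_eventually_mem_exposingSlopes f g hA hA' hfg
    ⟨a, ⟨ha, hev.exists⟩, upperBounds_eq_empty_of_eventually hev⟩
  have hVS : (slopeVertices f g S).Finite := hS.subset (slopeVertices_subset _ _ _)
  have hVT : (slopeVertices f g T).Finite := hT.subset (slopeVertices_subset _ _ _)
  calc (slopeVertices f g (S + T)).ncard + 1
      ≤ (key S '' slopeVertices f g S ∪ key T '' slopeVertices f g T).ncard +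
          (key S '' slopeVertices f g S ∩ key T '' slopeVertices f g T).ncard :=
        add_le_add (ncard_le_ncard_of_injOn _ hmaps hinj ((hVS.image _).union (hVT.image _)))
          ((ncard_pos ((hVS.image _).inter_of_left _)).2 ⟨∅, htop S hS hSne, htop T hT hTne⟩)
    _ = (key S '' slopeVertices f g S).ncard + (key T '' slopeVertices f g T).ncard :=
        ncard_union_add_ncard_inter _ _ (hVS.image _) (hVT.image _)
    _ ≤ _ := add_le_add (ncard_image_le hVS) (ncard_image_le hVT)

variable (f g)

theorem ncard_slopeVertices_add_ncard_le (hA : A.Finite) :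
    (slopeVertices f g A).ncard + (slopeVertices f (-g) A).ncard ≤
      A.ncard + (strictMaxPoints f A).ncard + (strictMaxPoints ⇑(-f) A).ncard := by
  have hV : (slopeVertices f g A).Finite := hA.subset (slopeVertices_subset _ _ _)
  have hV' : (slopeVertices f (-g) A).Finite := hA.subset (slopeVertices_subset _ _ _)
  have := ncard_union_add_ncard_inter _ _ hV hV'
  have := ncard_le_ncard
    (union_subset (slopeVertices_subset f g A) (slopeVertices_subset f (-g) A)) hA
  have hM : (strictMaxPoints f A ∪ strictMaxPoints ⇑(-f) A).Finite :=
    (hA.subset (strictMaxPoints_subset _ _)).union (hA.subset (strictMaxPoints_subset _ _))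
  have := (ncard_le_ncard (slopeVertices_inter_subset f g A) hM).trans (ncard_union_le _ _)
  omega

theorem ncard_slopeVertices_union_add_le (hA : A.Finite) (hA' : A.Nontrivial) :
    (slopeVertices f g A ∪ slopeVertices f (-g) A).ncard + (strictMaxPoints f A).ncard +
        (strictMaxPoints ⇑(-f) A).ncard ≤
      (slopeVertices f g A).ncard + (slopeVertices f (-g) A).ncard := by
  have hV : (slopeVertices f g A).Finite := hA.subset (slopeVertices_subset _ _ _)
  have hV' : (slopeVertices f (-g) A).Finite := hA.subset (slopeVertices_subset _ _ _)
  have hdisj : Disjoint (strictMaxPoints f A) (strictMaxPoints ⇑(-f) A) := by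
    refine disjoint_left.2 fun a ha ha' => ?_
    obtain ⟨x, hx, hxa⟩ := hA'.exists_ne a
    have h₁ := ha.2 x hx hxa
    have h₂ := ha'.2 x hx hxa
    simp only [AddMonoidHom.neg_apply] at h₂
    linarith
  have hsub : strictMaxPoints f A ∪ strictMaxPoints ⇑(-f) A ⊆
      slopeVertices f g A ∩ slopeVertices f (-g) A :=
    union_subset
      (subset_inter (strictMaxPoints_subset_slopeVertices f g hA)
        (strictMaxPoints_subset_slopeVertices f (-g) hA))
      (subset_inter (strictMaxPoints_neg_subset_slopeVertices f g hA)
        (strictMaxPoints_neg_subset_slopeVertices f (-g) hA))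
  have := ncard_union_eq hdisj (hA.subset (strictMaxPoints_subset _ _))
    (hA.subset (strictMaxPoints_subset _ _))
  have := ncard_le_ncard hsub (hV.inter_of_left _)
  have := ncard_union_add_ncard_inter _ _ hV hV'
  omega

variable {f g}

theorem ncard_slopeVertices_union_le (hS : S.Finite) (hT : T.Finite) (hS' : S.Nontrivial)
    (hT' : T.Nonempty) (hfg : Function.Injective fun x => (f x, g x)) :
    (slopeVertices f g (S + T) ∪ slopeVertices f (-g) (S + T)).ncard ≤ S.ncard + T.ncard := by
  have hfg' : Function.Injective fun x => (f x, (-g) x) := fun x y h => hfg (by simpa using h)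
  have h₁ := ncard_slopeVertices_add_add_one_le hS hT hS'.nonempty hT' hfg
  have h₂ := ncard_slopeVertices_add_add_one_le hS hT hS'.nonempty hT' hfg'
  have hS₁ := ncard_slopeVertices_add_ncard_le f g hS
  have hT₁ := ncard_slopeVertices_add_ncard_le f g hT
  have hX₁ := ncard_slopeVertices_union_add_le f g (hS.add hT) (hS'.add_right hT')
  have hM := ncard_strictMaxPoints_add_le f hS hT
  have hM' := ncard_strictMaxPoints_add_le (-f) hS hT
  omega

end Counting

theorem exists_isStrictMaxOn_of_mem_extremePoints {E : Type*} [TopologicalSpace E]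
    [AddCommGroup E] [Module ℝ E] [IsTopologicalAddGroup E] [ContinuousSMul ℝ E]
    [LocallyConvexSpace ℝ E] [T2Space E] {A : Set E} (hA : A.Finite) {v : E}
    (hv : v ∈ (convexHull ℝ A).extremePoints ℝ) :
    ∃ l : StrongDual ℝ E, IsStrictMaxOn l A v := by
  have hvA : v ∉ convexHull ℝ (A \ {v}) := fun h =>
    ((convex_convexHull ℝ A).mem_extremePoints_iff_mem_sdiff_convexHull_sdiff.1 hv).2
      (convexHull_mono (sdiff_subset_sdiff_left (subset_convexHull ℝ A)) h)
  obtain ⟨l, u, hl, hu⟩ := geometric_hahn_banach_closed_point (convex_convexHull ℝ _)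
    (hA.sdiff.isClosed_convexHull ℝ) hvA
  exact ⟨l, fun x hx hxv => (hl x (subset_convexHull ℝ _ ⟨hx, hxv⟩)).trans hu⟩

theorem extremePoints_convexHull_subset_slopeVertices {A : Set ℂ} (hA : A.Finite) :
    (convexHull ℝ A).extremePoints ℝ ⊆
      slopeVertices Complex.reAddGroupHom Complex.imAddGroupHom A ∪
        slopeVertices Complex.reAddGroupHom (-Complex.imAddGroupHom) A := by
  intro v hv
  obtain ⟨l, hl⟩ := exists_isStrictMaxOn_of_mem_extremePoints hA hv
  refine mem_slopeVertices_union _ _ hA (extremePoints_convexHull_subset hv)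
    (α := l 1) (β := l Complex.I) (hl.of_eq_mul zero_le_one fun z => ?_)
  conv_lhs => rw [← Complex.re_add_im z, ← mul_one (z.re : ℂ), ← Complex.real_smul,
    ← Complex.real_smul, map_add, map_smul, map_smul]
  simp only [smul_eq_mul, Complex.coe_reAddGroupHom, Complex.coe_imAddGroupHom]
  ring

theorem stmt_11 (S T : Set ℂ) (hSne : S.Nonempty) (hTne : T.Nonempty)
    (hSfin : S.Finite) (hTfin : T.Finite) :
    (Set.extremePoints ℝ (convexHull ℝ S + convexHull ℝ T)).ncard ≤
      S.ncard + T.ncard := by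
  rw [← convexHull_add]
  have hX : (S + T).Finite := hSfin.add hTfin
  rcases S.subsingleton_or_nontrivial with hS | hS
  · obtain ⟨a, ha⟩ := hSne
    rw [hS.eq_singleton_of_mem ha] at hX ⊢
    calc _ ≤ ({a} + T).ncard := ncard_le_ncard extremePoints_convexHull_subset hX
      _ = T.ncard := by rw [singleton_add, ncard_image_of_injective _ (add_right_injective a)]
      _ ≤ _ := Nat.le_add_left _ _
  · calc _ ≤ _ := ncard_le_ncard (extremePoints_convexHull_subset_slopeVertices hX)
          ((hX.subset (slopeVertices_subset _ _ _)).union (hX.subset (slopeVertices_subset _ _ _)))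
      _ ≤ _ := ncard_slopeVertices_union_le hSfin hTfin hS hTne
          fun z w h => Complex.ext (congrArg Prod.fst h) (congrArg Prod.snd h)
end
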